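/- arXiv:1901.02090 — 2 statements merged into one kernel-verified Lean document; each statement's English description precedes it below -/
import Mathlib

section
/- Let V be a finite-dimensional real vector space, a a symmetric positive definite bilinear form on V, and Q a finite-dimensional space with a bilinear form b : V × Q → ℝ. Define the balanced subspace V_B = { v ∈ V : b(v,q) = 0 for all q ∈ Q }. Then (u,p) ∈ V × Q solves the saddle-point system a(u,v) + b(v,p) = F(v) for all v ∈ V and b(u,q) = 0 for all q ∈ Q if and only if u ∈ V_B solves a(u,v) = F(v) for all v ∈ V_B, and p exists whenever b is surjective onto Q' (inf-sup condition). -/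
/-- Equivalence of the saddle-point problem and the positive definite problem on the
balanced subspace `V_B = { v : b(v,q) = 0 ∀q }`: any saddle-point solution `(u,p)` gives
a solution `u ∈ V_B` of the reduced problem, and conversely, under the discrete inf-sup
condition (surjectivity of `v ↦ b(v,·)` onto `Q'`) a reduced solution admits a
Lagrange multiplier `p`. -/
theorem stmt_4 {V Q : Type*} [AddCommGroup V] [Module ℝ V] [FiniteDimensional ℝ V]
    [AddCommGroup Q] [Module ℝ Q] [FiniteDimensional ℝ Q]
    (a : V →ₗ[ℝ] V →ₗ[ℝ] ℝ)
    (hsymm : ∀ x y, a x y = a y x)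
    (hpos : ∀ x, x ≠ 0 → 0 < a x x)
    (b : V →ₗ[ℝ] Q →ₗ[ℝ] ℝ)
    (F : V →ₗ[ℝ] ℝ) :
    (∀ u : V, ∀ p : Q,
      ((∀ v : V, a u v + b v p = F v) ∧ (∀ q : Q, b u q = 0)) →
        ((∀ q : Q, b u q = 0) ∧
          ∀ v : V, (∀ q : Q, b v q = 0) → a u v = F v)) ∧
    (Function.Surjective (fun v : V => b v) →
      ∀ u : V, (∀ q : Q, b u q = 0) →
        (∀ v : V, (∀ q : Q, b v q = 0) → a u v = F v) →
        ∃ p : Q, (∀ v : V, a u v + b v p = F v) ∧ (∀ q : Q, b u q = 0)) := by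
  constructor
  · rintro u p ⟨h1, h2⟩
    refine ⟨h2, fun v hv => ?_⟩
    have := h1 v
    rw [hv p, add_zero] at this
    exact this
  · intro hsurj u hu hred
    -- the defect functional G = F - a u vanishes on ker b
    set G : V →ₗ[ℝ] ℝ := F - a u with hG
    have hGker : ∀ v : V, b v = 0 → G v = 0 := by
      intro v hv
      have : ∀ q : Q, b v q = 0 := fun q => by rw [hv]; rfl
      simp [hG, hred v this]
    -- b : V →ₗ Q' is surjective, so it has a linear right inverse s
    have hbs : Function.Surjective (b : V →ₗ[ℝ] (Q →ₗ[ℝ] ℝ)) := hsurj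
    obtain ⟨s, hs⟩ := b.exists_rightInverse_of_surjective
      (LinearMap.range_eq_top.mpr hbs)
    -- h := G ∘ s ∈ (Q')', corresponds to some p ∈ Q by reflexivity
    set h : (Q →ₗ[ℝ] ℝ) →ₗ[ℝ] ℝ := G.comp s with hh
    set p : Q := (Module.evalEquiv ℝ Q).symm h with hp
    refine ⟨p, fun v => ?_, hu⟩
    have hbp : b v p = h (b v) := Module.apply_evalEquiv_symm_apply ℝ Q (b v) h
    have hGv : G v = h (b v) := by
      have hker : b (v - s (b v)) = 0 := by
        have := congrArg (fun f => f (b v)) hs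
        simp only [LinearMap.comp_apply, LinearMap.id_apply] at this
        simp [this]
      have := hGker _ hker
      simp only [map_sub, sub_eq_zero] at this
      simpa [hh] using this
    have : G v = F v - a u v := by simp [hG]
    linarith [hbp, hGv, this]
end

section
/- Conjugate gradient error bound: for an SPD system with condition number κ, the k-th CG iterate satisfies ‖x − x_k‖_A ≤ 2 ((√κ − 1)/(√κ + 1))^k ‖x − x₀‖_A. -/
/-!
For every real polynomial `P` of degree at most `k` with `P 0 = 1`, the vector
`x₀ + (1 - P(A)) (x - x₀)` lies in `x₀ + K_k(A, r₀)` and its error is `P(A) (x - x₀)`. Since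
`‖P(A) v‖_A ≤ max_{t ∈ spectrum A} |P t| · ‖v‖_A` by the functional calculus, minimality of the CG
iterate gives `‖x - x_k‖_A ≤ max_{[λ_min, λ_max]} |P| · ‖x - x₀‖_A` for every such `P`.

The rescaled Chebyshev polynomial `T_k((λ_max + λ_min - 2t)/(λ_max - λ_min)) / T_k((κ + 1)/(κ - 1))`
is bounded by `1 / T_k((κ + 1)/(κ - 1))` on `[λ_min, λ_max]`. With `ρ = (√κ - 1)/(√κ + 1)` we have
`(κ + 1)/(κ - 1) = (ρ + ρ⁻¹)/2`, hence `T_k((κ + 1)/(κ - 1)) = (ρ^k + ρ^{-k})/2 ≥ ρ^{-k}/2`.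
-/

open Matrix Polynomial
open scoped MatrixOrder

section Krylov

variable {ι R : Type*} [Fintype ι] [DecidableEq ι] [CommRing R]

def krylovSubspace (A : Matrix ι ι R) (r : ι → R) (k : ℕ) : Submodule R (ι → R) :=
  Submodule.span R {v | ∃ j < k, v = (A ^ j) *ᵥ r}

lemma sub_aeval_mulVec_mem_krylovSubspace {k : ℕ} (A : Matrix ι ι R) {P : R[X]}
    (hP0 : P.eval 0 = 1) (hdeg : P.natDegree ≤ k) (e : ι → R) :
    e - aeval A P *ᵥ e ∈ krylovSubspace A (A *ᵥ e) k := by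
  have hsum : aeval A P *ᵥ e = e + ∑ j ∈ Finset.range k, P.coeff (j + 1) • (A ^ j) *ᵥ (A *ᵥ e) := by
    rw [aeval_eq_sum_range' (Nat.lt_succ_of_le hdeg), Finset.sum_range_succ',
      coeff_zero_eq_eval_zero, hP0]
    simp only [pow_zero, one_smul, pow_succ, add_comm, add_mulVec, one_mulVec, sum_mulVec,
      smul_mulVec, mulVec_mulVec]
  rw [hsum, sub_add_cancel_left, neg_mem_iff]
  exact Submodule.sum_mem _ fun j hj =>
    Submodule.smul_mem _ _ (Submodule.subset_span ⟨j, Finset.mem_range.1 hj, rfl⟩)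

end Krylov

section Spectrum

variable {ι : Type*} [Fintype ι] [DecidableEq ι]

lemma Matrix.spectrum_subset_Icc_of_forall_dotProduct_mulVec {A : Matrix ι ι ℝ} {a c : ℝ}
    (h : ∀ z : ι → ℝ, a * (z ⬝ᵥ z) ≤ z ⬝ᵥ A *ᵥ z ∧ z ⬝ᵥ A *ᵥ z ≤ c * (z ⬝ᵥ z)) :
    spectrum ℝ A ⊆ Set.Icc a c := by
  intro t ht
  rw [← spectrum_toLin'] at ht
  obtain ⟨z, hz, hz0⟩ := (Module.End.HasEigenvalue.of_mem_spectrum ht).exists_hasEigenvector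
  rw [Module.End.mem_eigenspace_iff, toLin'_apply] at hz
  have hzz : 0 < z ⬝ᵥ z := by simpa using dotProduct_star_self_pos_iff.2 hz0
  obtain ⟨hle, hge⟩ := h z
  rw [hz, dotProduct_smul, smul_eq_mul] at hle hge
  exact ⟨le_of_mul_le_mul_right hle hzz, le_of_mul_le_mul_right hge hzz⟩

lemma Matrix.PosSemidef.aeval_mulVec_dotProduct_le {A : Matrix ι ι ℝ} (hA : A.PosSemidef)
    {P : ℝ[X]} {M : ℝ} (hP : ∀ t ∈ spectrum ℝ A, |P.eval t| ≤ M) (v : ι → ℝ) :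
    aeval A P *ᵥ v ⬝ᵥ A *ᵥ (aeval A P *ᵥ v) ≤ M ^ 2 * (v ⬝ᵥ A *ᵥ v) := by
  have hsa : IsSelfAdjoint A := hA.isHermitian
  have hPsymm : (aeval A P)ᵀ = aeval A P := by
    rw [← cfc_polynomial P A]
    exact (IsSelfAdjoint.cfc (f := P.eval) (a := A)).star_eq
  have hcfc : M ^ 2 • A - aeval A P * A * aeval A P =
      cfc (fun t => M ^ 2 * t - P.eval t * t * P.eval t) A := by
    rw [cfc_sub .., cfc_const_mul .., cfc_mul .., cfc_mul .., cfc_polynomial .., cfc_id' ..]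
  have hnonneg : 0 ≤ M ^ 2 • A - aeval A P * A * aeval A P := by
    rw [hcfc]
    refine cfc_nonneg fun t ht => ?_
    have ht0 : 0 ≤ t := spectrum_nonneg_of_nonneg (nonneg_iff_posSemidef.2 hA) ht
    have hPt : P.eval t ^ 2 ≤ M ^ 2 := sq_le_sq' (abs_le.1 (hP t ht)).1 (abs_le.1 (hP t ht)).2
    nlinarith
  have := (nonneg_iff_posSemidef.1 hnonneg).dotProduct_mulVec_nonneg v
  simp only [star_trivial, sub_mulVec, smul_mulVec, dotProduct_sub, dotProduct_smul,
    ← mulVec_mulVec] at this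
  rw [dotProduct_mulVec v (aeval A P), ← mulVec_transpose, hPsymm] at this
  simpa [sub_nonneg] using this

end Spectrum

lemma Polynomial.Chebyshev.eval_T_real_half_add_inv (k : ℕ) {ρ : ℝ} (hρ : 0 < ρ) :
    (T ℝ k).eval ((ρ + ρ⁻¹) / 2) = (ρ ^ k + (ρ ^ k)⁻¹) / 2 := by
  rw [← Real.cosh_log hρ, T_real_cosh, Int.cast_natCast, ← Real.log_pow,
    Real.cosh_log (by positivity)]

lemma exists_eval_zero_eq_one_abs_le_of_lt {a c : ℝ} (ha : 0 < a) (hac : a < c) (k : ℕ) :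
    ∃ P : ℝ[X], P.eval 0 = 1 ∧ P.natDegree ≤ k ∧
      ∀ t ∈ Set.Icc a c, |P.eval t| ≤ 2 * ((√(c / a) - 1) / (√(c / a) + 1)) ^ k := by
  have hca : 0 < c - a := by linarith
  set s := √(c / a)
  have hs : 1 < s := Real.lt_sqrt_of_sq_lt (by rw [one_pow, one_lt_div ha]; exact hac)
  have hs2 : s ^ 2 = c / a := Real.sq_sqrt (div_pos (ha.trans hac) ha).le
  have hρ : 0 < (s - 1) / (s + 1) := div_pos (by linarith) (by linarith)
  have hmid : (c + a) / (c - a) = ((s - 1) / (s + 1) + ((s - 1) / (s + 1))⁻¹) / 2 := by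
    have hs1 : s - 1 ≠ 0 := by linarith
    have hs21 : s ^ 2 - 1 ≠ 0 := by nlinarith
    calc (c + a) / (c - a) = (s ^ 2 + 1) / (s ^ 2 - 1) := by
          rw [hs2]; field_simp
      _ = _ := by field_simp; ring
  set ρ := (s - 1) / (s + 1)
  have hτ : (ρ ^ k)⁻¹ / 2 ≤ (Chebyshev.T ℝ k).eval ((c + a) / (c - a)) := by
    rw [hmid, Chebyshev.eval_T_real_half_add_inv k hρ]
    linarith [pow_pos hρ k]
  set τ := (Chebyshev.T ℝ k).eval ((c + a) / (c - a))
  have hτ0 : 0 < τ := lt_of_lt_of_le (by positivity) hτ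
  have hτρ : τ⁻¹ ≤ 2 * ρ ^ k := by
    simpa only [inv_div, div_inv_eq_mul] using inv_anti₀ (by positivity) hτ
  refine ⟨C τ⁻¹ * (Chebyshev.T ℝ k).comp (C (-(2 / (c - a))) * X + C ((c + a) / (c - a))),
    ?_, ?_, ?_⟩
  · simp [τ, hτ0.ne']
  · calc _ ≤ (Chebyshev.T ℝ k).natDegree * 1 :=
          (natDegree_C_mul_le _ _).trans <|
            natDegree_comp_le.trans (by gcongr; exact natDegree_linear_le)
      _ = k := by rw [Chebyshev.natDegree_T, mul_one, Int.natAbs_natCast]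
  · intro t ⟨hat, htc⟩
    have hy : |-(2 / (c - a)) * t + (c + a) / (c - a)| ≤ 1 := by
      rw [abs_le, neg_mul, ← mul_div_right_comm, neg_add_eq_sub, div_sub_div_same,
        le_div_iff₀ hca, div_le_one hca]
      constructor <;> linarith
    simp only [eval_mul, eval_C, eval_comp, eval_add, eval_X, abs_mul, abs_of_pos (inv_pos.2 hτ0)]
    calc τ⁻¹ * |(Chebyshev.T ℝ k).eval _| ≤ τ⁻¹ * 1 := by
          gcongr; exact Chebyshev.abs_eval_T_real_le_one _ hy
      _ ≤ 2 * ρ ^ k := by rw [mul_one]; exact hτρ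

lemma exists_eval_zero_eq_one_abs_le {a c : ℝ} (ha : 0 < a) (hac : a ≤ c) (k : ℕ) :
    ∃ P : ℝ[X], P.eval 0 = 1 ∧ P.natDegree ≤ k ∧
      ∀ t ∈ Set.Icc a c, |P.eval t| ≤ 2 * ((√(c / a) - 1) / (√(c / a) + 1)) ^ k := by
  rcases hac.eq_or_lt with rfl | hlt
  · refine ⟨(1 - C a⁻¹ * X) ^ k, by simp, ?_, ?_⟩
    · exact (natDegree_pow_le_of_le k (by compute_degree : (1 - C a⁻¹ * X).natDegree ≤ 1)).trans_eq
        (mul_one k)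
    · rintro t ⟨hat, hta⟩
      obtain rfl := le_antisymm hta hat
      simp only [eval_pow, eval_sub, eval_one, eval_mul, eval_C, eval_X, inv_mul_cancel₀ ha.ne',
        sub_self, div_self ha.ne', Real.sqrt_one, abs_pow, abs_zero, zero_div]
      linarith [pow_nonneg (le_refl (0 : ℝ)) k]
  · exact exists_eval_zero_eq_one_abs_le_of_lt ha hlt k

theorem stmt_18_general {n : ℕ} (A : Matrix (Fin n) (Fin n) ℝ) (hA : A.PosDef)
    (lamMin lamMax : ℝ) (hmin : 0 < lamMin) (hminmax : lamMin ≤ lamMax)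
    (hspec : ∀ z : Fin n → ℝ, lamMin * (z ⬝ᵥ z) ≤ z ⬝ᵥ A.mulVec z ∧
      z ⬝ᵥ A.mulVec z ≤ lamMax * (z ⬝ᵥ z))
    (κ : ℝ) (hκ : κ = lamMax / lamMin)
    (b x x₀ : Fin n → ℝ) (hx : A.mulVec x = b)
    (k : ℕ) (xk : Fin n → ℝ)
    (hmin' : ∀ d ∈ Submodule.span ℝ
        {v : Fin n → ℝ | ∃ j < k, v = (A ^ j).mulVec (b - A.mulVec x₀)},
      Real.sqrt ((x - xk) ⬝ᵥ A.mulVec (x - xk)) ≤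
        Real.sqrt ((x - (x₀ + d)) ⬝ᵥ A.mulVec (x - (x₀ + d)))) :
    Real.sqrt ((x - xk) ⬝ᵥ A.mulVec (x - xk)) ≤
      2 * ((Real.sqrt κ - 1) / (Real.sqrt κ + 1)) ^ k *
        Real.sqrt ((x - x₀) ⬝ᵥ A.mulVec (x - x₀)) := by
  subst hκ
  obtain ⟨P, hP0, hdeg, hP⟩ := exists_eval_zero_eq_one_abs_le hmin hminmax k
  set M := 2 * ((√(lamMax / lamMin) - 1) / (√(lamMax / lamMin) + 1)) ^ k
  have hM : 0 ≤ M := (abs_nonneg _).trans (hP lamMin ⟨le_rfl, hminmax⟩)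
  set e₀ := x - x₀
  have hr₀ : b - A *ᵥ x₀ = A *ᵥ e₀ := by rw [mulVec_sub, hx]
  have hd : e₀ - aeval A P *ᵥ e₀ ∈ krylovSubspace A (b - A *ᵥ x₀) k :=
    hr₀ ▸ sub_aeval_mulVec_mem_krylovSubspace A hP0 hdeg e₀
  have herr : x - (x₀ + (e₀ - aeval A P *ᵥ e₀)) = aeval A P *ᵥ e₀ := by
    simp only [e₀]; abel
  calc √((x - xk) ⬝ᵥ A *ᵥ (x - xk))
      ≤ √(aeval A P *ᵥ e₀ ⬝ᵥ A *ᵥ (aeval A P *ᵥ e₀)) := herr ▸ hmin' _ hd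
    _ ≤ √(M ^ 2 * (e₀ ⬝ᵥ A *ᵥ e₀)) := Real.sqrt_le_sqrt <|
        hA.posSemidef.aeval_mulVec_dotProduct_le
          (fun t ht => hP t (spectrum_subset_Icc_of_forall_dotProduct_mulVec hspec ht)) e₀
    _ = M * √(e₀ ⬝ᵥ A *ᵥ e₀) := by rw [Real.sqrt_mul (sq_nonneg M), Real.sqrt_sq hM]

/-- Conjugate gradient error bound: for an SPD matrix `A` whose spectrum lies in
`[λ_min, λ_max]`, with condition number `κ = λ_max/λ_min`, the `k`-th CG iterate
(characterized by `A`-norm minimization over the affine Krylov space `x₀ + K_k(A,r₀)`)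
satisfies `‖x − x_k‖_A ≤ 2 ((√κ−1)/(√κ+1))^k ‖x − x₀‖_A`. -/
theorem stmt_18 {n : ℕ} (A : Matrix (Fin n) (Fin n) ℝ) (hA : A.PosDef)
    (lamMin lamMax : ℝ) (hmin : 0 < lamMin) (hminmax : lamMin ≤ lamMax)
    (hspec : ∀ z : Fin n → ℝ, lamMin * (z ⬝ᵥ z) ≤ z ⬝ᵥ A.mulVec z ∧
      z ⬝ᵥ A.mulVec z ≤ lamMax * (z ⬝ᵥ z))
    (κ : ℝ) (hκ : κ = lamMax / lamMin)
    (b x x₀ : Fin n → ℝ) (hx : A.mulVec x = b)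
    (k : ℕ) (xk : Fin n → ℝ)
    (hKrylov : xk - x₀ ∈ Submodule.span ℝ
      {v : Fin n → ℝ | ∃ j < k, v = (A ^ j).mulVec (b - A.mulVec x₀)})
    (hmin' : ∀ d ∈ Submodule.span ℝ
        {v : Fin n → ℝ | ∃ j < k, v = (A ^ j).mulVec (b - A.mulVec x₀)},
      Real.sqrt ((x - xk) ⬝ᵥ A.mulVec (x - xk)) ≤
        Real.sqrt ((x - (x₀ + d)) ⬝ᵥ A.mulVec (x - (x₀ + d)))) :
    Real.sqrt ((x - xk) ⬝ᵥ A.mulVec (x - xk)) ≤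
      2 * ((Real.sqrt κ - 1) / (Real.sqrt κ + 1)) ^ k *
        Real.sqrt ((x - x₀) ⬝ᵥ A.mulVec (x - x₀)) :=
  stmt_18_general A hA lamMin lamMax hmin hminmax hspec κ hκ b x x₀ hx k xk hmin'
end
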